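/- arXiv:2512.11294 — 2 statements merged into one kernel-verified Lean document; each statement's English description precedes it below -/
import Mathlib

section
/- Let p ≥ 2, q > p, a₀ > 0, c_a ≥ 1, λ ≥ 1, and Λ = λ^p + a₀·λ^q. Let D be a set and a : D → ℝ satisfy a₀/(2c_a) < a(z) < 2c_a·a₀ for all z ∈ D. Suppose f, g : D → [0,∞) are integrable on a finite measure space (D,μ), with (1/μ(D))∫_D (f^p + g^p + a·(f^q+g^q)) dμ < Λ. Then (1/μ(D))∫_D (f^p + g^p) dμ ≤ (1 + 2^{1+q/p}·c_a)^{p/q} · λ^p. -/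
/-!
Since `a ≥ a₀ / (2 c_a)`, pointwise `f^p + g^p ≤ 2 (C a (f^q + g^q))^{p/q}` with
`C = 2 c_a / a₀`, and Jensen's inequality for the concave map `t ↦ t^{p/q}` turns this into
`⨍ (f^p + g^p) ≤ 2 (C ⨍ a (f^q + g^q))^{p/q}`. Since the two averages add up to less than
`λ^p + a₀ λ^q`, either the `p`-average is below `λ^p`, or the `a`-weighted `q`-average is
below `a₀ λ^q`, and then the bound gives `2 (2 c_a)^{p/q} λ^p ≤ (1 + 2^{1+q/p} c_a)^{p/q} λ^p`.
-/

open MeasureTheory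

namespace Real

lemma rpow_le_one_add {x s : ℝ} (hx : 0 ≤ x) (hs0 : 0 ≤ s) (hs1 : s ≤ 1) : x ^ s ≤ 1 + x := by
  rcases le_total x 1 with h | h
  · linarith [rpow_le_one hx h hs0]
  · linarith [rpow_le_self_of_one_le h hs1]

lemma rpow_add_rpow_le_two_mul_rpow {x y p q : ℝ} (hx : 0 ≤ x) (hy : 0 ≤ y) (hp : 0 ≤ p)
    (hq : 0 < q) : x ^ p + y ^ p ≤ 2 * (x ^ q + y ^ q) ^ (p / q) := by
  have hxq := rpow_nonneg hx q
  have hyq := rpow_nonneg hy q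
  have key : ∀ t, 0 ≤ t → t ^ q ≤ x ^ q + y ^ q → t ^ p ≤ (x ^ q + y ^ q) ^ (p / q) := by
    intro t ht hle
    calc t ^ p = (t ^ q) ^ (p / q) := by rw [← rpow_mul ht, mul_div_cancel₀ p hq.ne']
      _ ≤ _ := rpow_le_rpow (rpow_nonneg ht q) hle (div_nonneg hp hq.le)
  linarith [key x hx (by linarith), key y hy (by linarith)]

lemma two_mul_rpow_le {p q c : ℝ} (hp : 0 < p) (hq : 0 < q) (hc : 0 ≤ c) :
    2 * (2 * c) ^ (p / q) ≤ (1 + 2 ^ (1 + q / p) * c) ^ (p / q) := by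
  calc 2 * (2 * c) ^ (p / q) = ((2 : ℝ) ^ (q / p)) ^ (p / q) * (2 * c) ^ (p / q) := by
        rw [← rpow_mul zero_le_two, div_mul_div_cancel₀ hp.ne', div_self hq.ne', rpow_one]
    _ = (2 ^ (1 + q / p) * c) ^ (p / q) := by
        rw [← mul_rpow (by positivity) (by positivity), rpow_add zero_lt_two, rpow_one]
        ring_nf
    _ ≤ (1 + 2 ^ (1 + q / p) * c) ^ (p / q) :=
        rpow_le_rpow (by positivity) (by linarith) (by positivity)

lemma le_rpow_mul_of_add_lt_of_le_two_mul_rpow {A B p q a₀ c lam : ℝ} (hp : 0 < p)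
    (hpq : p < q) (ha₀ : 0 < a₀) (hc : 0 ≤ c) (hlam : 0 ≤ lam) (hB0 : 0 ≤ B)
    (hA : A ≤ 2 * (2 * c / a₀ * B) ^ (p / q)) (hAB : A + B < lam ^ p + a₀ * lam ^ q) :
    A ≤ (1 + 2 ^ (1 + q / p) * c) ^ (p / q) * lam ^ p := by
  have hq : 0 < q := hp.trans hpq
  rcases lt_or_ge A (lam ^ p) with hlow | hlow
  · refine hlow.le.trans (le_mul_of_one_le_left (by positivity) ?_)
    exact one_le_rpow (by linarith [(by positivity : (0 : ℝ) ≤ 2 ^ (1 + q / p) * c)])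
      (by positivity)
  · calc A ≤ 2 * (2 * c / a₀ * B) ^ (p / q) := hA
      _ ≤ 2 * (2 * c / a₀ * (a₀ * lam ^ q)) ^ (p / q) := by gcongr; linarith
      _ = 2 * (2 * c) ^ (p / q) * lam ^ p := by
        rw [← mul_assoc, div_mul_cancel₀ _ ha₀.ne', mul_rpow (by positivity) (by positivity),
          ← rpow_mul hlam, mul_div_cancel₀ p hq.ne', mul_assoc]
      _ ≤ (1 + 2 ^ (1 + q / p) * c) ^ (p / q) * lam ^ p := by
        gcongr
        exact two_mul_rpow_le hp hq hc

end Real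

namespace MeasureTheory

variable {α : Type*} [MeasurableSpace α] {μ : Measure α}

lemma average_eq_integral_div (f : α → ℝ) :
    ⨍ x, f x ∂μ = (∫ x, f x ∂μ) / (μ Set.univ).toReal := by
  rw [average_eq, measureReal_def, smul_eq_mul, inv_mul_eq_div]

lemma average_mono_of_le {f g : α → ℝ} (hf : Integrable f μ) (hg : Integrable g μ)
    (h : ∀ x, f x ≤ g x) : ⨍ x, f x ∂μ ≤ ⨍ x, g x ∂μ := by
  simp only [average_eq, smul_eq_mul]
  exact mul_le_mul_of_nonneg_left (integral_mono hf hg h) (by positivity)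

lemma average_const_mul (c : ℝ) (f : α → ℝ) : ⨍ x, c * f x ∂μ = c * ⨍ x, f x ∂μ :=
  integral_const_mul c f

lemma Integrable.rpow_const_of_le_one [IsFiniteMeasure μ] {ψ : α → ℝ} {s : ℝ}
    (hψ : Integrable ψ μ) (hψ0 : ∀ x, 0 ≤ ψ x) (hs0 : 0 ≤ s) (hs1 : s ≤ 1) :
    Integrable (fun x => ψ x ^ s) μ := by
  refine ((integrable_const 1).add hψ).mono'
    ((Real.continuous_rpow_const hs0).comp_aestronglyMeasurable hψ.aestronglyMeasurable)
    (ae_of_all _ fun x => ?_)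
  rw [Real.norm_of_nonneg (Real.rpow_nonneg (hψ0 x) s)]
  exact Real.rpow_le_one_add (hψ0 x) hs0 hs1

lemma average_rpow_le_rpow_average [IsFiniteMeasure μ] {ψ : α → ℝ} {s : ℝ}
    (hψ : Integrable ψ μ) (hψ0 : ∀ x, 0 ≤ ψ x) (hs0 : 0 ≤ s) (hs1 : s ≤ 1) :
    ⨍ x, ψ x ^ s ∂μ ≤ (⨍ x, ψ x ∂μ) ^ s := by
  rcases eq_zero_or_neZero μ with rfl | _
  · simpa using Real.rpow_nonneg le_rfl s
  exact (Real.concaveOn_rpow hs0 hs1).le_map_average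
    (Real.continuous_rpow_const hs0).continuousOn isClosed_Ici (ae_of_all _ hψ0) hψ
    (hψ.rpow_const_of_le_one hψ0 hs0 hs1)

lemma average_rpow_add_rpow_le [IsFiniteMeasure μ] {f g h : α → ℝ} {p q C : ℝ}
    (hp : 0 ≤ p) (hpq : p ≤ q) (hq : 0 < q) (hf0 : ∀ x, 0 ≤ f x) (hg0 : ∀ x, 0 ≤ g x)
    (hh0 : ∀ x, 0 ≤ h x) (hC : 0 ≤ C) (hdom : ∀ x, f x ^ q + g x ^ q ≤ C * h x)
    (hint : Integrable (fun x => f x ^ p + g x ^ p) μ) (hh : Integrable h μ) :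
    ⨍ x, f x ^ p + g x ^ p ∂μ ≤ 2 * (C * ⨍ x, h x ∂μ) ^ (p / q) := by
  have hs0 : 0 ≤ p / q := div_nonneg hp hq.le
  have hs1 : p / q ≤ 1 := (div_le_one hq).2 hpq
  have hCh0 : ∀ x, 0 ≤ C * h x := fun x => mul_nonneg hC (hh0 x)
  have hCh : Integrable (fun x => C * h x) μ := hh.const_mul C
  have hpoint : ∀ x, f x ^ p + g x ^ p ≤ 2 * (C * h x) ^ (p / q) := fun x =>
    (Real.rpow_add_rpow_le_two_mul_rpow (hf0 x) (hg0 x) hp hq).trans <|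
      mul_le_mul_of_nonneg_left
        (Real.rpow_le_rpow (by positivity [hf0 x, hg0 x]) (hdom x) hs0) zero_le_two
  calc ⨍ x, f x ^ p + g x ^ p ∂μ ≤ ⨍ x, 2 * (C * h x) ^ (p / q) ∂μ :=
        average_mono_of_le hint ((hCh.rpow_const_of_le_one hCh0 hs0 hs1).const_mul 2) hpoint
    _ = 2 * ⨍ x, (C * h x) ^ (p / q) ∂μ := average_const_mul _ _
    _ ≤ 2 * (⨍ x, C * h x ∂μ) ^ (p / q) := by
        gcongr
        exact average_rpow_le_rpow_average hCh hCh0 hs0 hs1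
    _ = 2 * (C * ⨍ x, h x ∂μ) ^ (p / q) := by rw [average_const_mul]

end MeasureTheory

theorem stmt2_general {D : Type*} [MeasurableSpace D] (μ : Measure D) [IsFiniteMeasure μ]
    (p q a₀ c_a lam : ℝ) (hp : 2 ≤ p) (hq : p < q) (ha₀ : 0 < a₀) (hca : 1 ≤ c_a)
    (hlam : 1 ≤ lam)
    (a f g : D → ℝ)
    (hf0 : ∀ z, 0 ≤ f z) (hg0 : ∀ z, 0 ≤ g z)
    (hcomp : ∀ z, a₀ / (2 * c_a) < a z ∧ a z < 2 * c_a * a₀)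
    (hint1 : Integrable (fun z => f z ^ p + g z ^ p) μ)
    (hint2 : Integrable (fun z => a z * (f z ^ q + g z ^ q)) μ)
    (hbound : (∫ z, (f z ^ p + g z ^ p + a z * (f z ^ q + g z ^ q)) ∂μ)
        / (μ Set.univ).toReal < lam ^ p + a₀ * lam ^ q) :
    (∫ z, (f z ^ p + g z ^ p) ∂μ) / (μ Set.univ).toReal
      ≤ (1 + 2 ^ (1 + q / p) * c_a) ^ (p / q) * lam ^ p := by
  have hψ0 : ∀ z, 0 ≤ a z * (f z ^ q + g z ^ q) := fun z =>
    mul_nonneg (lt_trans (by positivity) (hcomp z).1).le (by positivity [hf0 z, hg0 z])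
  have hdom : ∀ z, f z ^ q + g z ^ q ≤ 2 * c_a / a₀ * (a z * (f z ^ q + g z ^ q)) := by
    intro z
    rw [← mul_assoc]
    refine le_mul_of_one_le_left (by positivity [hf0 z, hg0 z]) ?_
    rw [div_mul_eq_mul_div, one_le_div ha₀]
    exact ((div_lt_iff₀' (by positivity)).1 (hcomp z).1).le
  have hA := average_rpow_add_rpow_le (μ := μ) (by linarith) hq.le (by linarith) hf0 hg0 hψ0
    (by positivity) hdom hint1 hint2
  have hB0 : 0 ≤ ⨍ z, a z * (f z ^ q + g z ^ q) ∂μ := by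
    rw [average_eq_integral_div]
    exact div_nonneg (integral_nonneg hψ0) ENNReal.toReal_nonneg
  rw [integral_add hint1 hint2, add_div] at hbound
  simp only [← average_eq_integral_div] at hbound ⊢
  exact Real.le_rpow_mul_of_add_lt_of_le_two_mul_rpow (by linarith) hq ha₀ (by linarith)
    (by linarith) hB0 hA hbound

/-- Abstract form of the `q_trick`: under comparability of the coefficient `a` with `a₀`
and the bound of the total double-phase average by `Λ = λ^p + a₀ λ^q`, the `p`-part of
the average is at most `(1 + 2^{1+q/p} c_a)^{p/q} λ^p`. -/
theorem stmt2 {D : Type*} [MeasurableSpace D] (μ : Measure D) [IsFiniteMeasure μ]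
    (hμ : μ Set.univ ≠ 0)
    (p q a₀ c_a lam : ℝ) (hp : 2 ≤ p) (hq : p < q) (ha₀ : 0 < a₀) (hca : 1 ≤ c_a)
    (hlam : 1 ≤ lam)
    (a f g : D → ℝ)
    (hf0 : ∀ z, 0 ≤ f z) (hg0 : ∀ z, 0 ≤ g z)
    (hcomp : ∀ z, a₀ / (2 * c_a) < a z ∧ a z < 2 * c_a * a₀)
    (hint1 : Integrable (fun z => f z ^ p + g z ^ p) μ)
    (hint2 : Integrable (fun z => a z * (f z ^ q + g z ^ q)) μ)
    (hbound : (∫ z, (f z ^ p + g z ^ p + a z * (f z ^ q + g z ^ q)) ∂μ)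
        / (μ Set.univ).toReal < lam ^ p + a₀ * lam ^ q) :
    (∫ z, (f z ^ p + g z ^ p) ∂μ) / (μ Set.univ).toReal
      ≤ (1 + 2 ^ (1 + q / p) * c_a) ^ (p / q) * lam ^ p :=
  stmt2_general μ p q a₀ c_a lam hp hq ha₀ hca hlam a f g hf0 hg0 hcomp hint1 hint2 hbound
end

section
/- Let p ≥ 2, q > p, c_a ≥ 1, and let C = 2(1 + c_a + M) with M ≥ 10·c_a. Let λ_w, λ_v ≥ 1 and a_w, a_v ≥ 0 satisfy λ_w^p + a_w·λ_w^q = λ_v^p + a_v·λ_v^q = Λ > 0 and a_v/(2c_a) < a_w < 2c_a·a_v. If λ_w > C^{1/p}·λ_v, then we reach a contradiction; consequently λ_w ≤ C^{1/p}·λ_v and, symmetrically, λ_v ≤ C^{1/p}·λ_w. -/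
/-!
Write `H(a, t) = t^p + a t^q`. Since `q ≥ p`, rescaling `t` by `K^{1/p}` multiplies `H` by at
least `K`, and `H` is strictly increasing in `t`. If `λ_w > C^{1/p} λ_v`, then
`Λ = H(a_w, λ_w) > H(a_w, C^{1/p} λ_v) ≥ C H(a_w, λ_v) ≥ H(a_v, λ_v) = Λ`, the last step because
`a_v < 2 c_a a_w ≤ C a_w`.
-/

open Real

noncomputable def doublePhase (p q a t : ℝ) : ℝ := t ^ p + a * t ^ q

section doublePhase

variable {p q a t K : ℝ}

lemma mul_rpow_le_rpow_inv_mul_rpow (hp : 0 < p) (hpq : p ≤ q) (hK : 1 ≤ K) (ht : 0 ≤ t) :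
    K * t ^ q ≤ (K ^ (1 / p) * t) ^ q := by
  have hexp : 1 ≤ 1 / p * q := by rw [one_div_mul_eq_div, one_le_div hp]; exact hpq
  rw [mul_rpow (by positivity) ht, ← rpow_mul (by positivity)]
  gcongr
  exact self_le_rpow_of_one_le hK hexp

lemma mul_doublePhase_le_doublePhase_rpow_inv_mul (hp : 0 < p) (hpq : p ≤ q) (hK : 1 ≤ K)
    (ha : 0 ≤ a) (ht : 0 ≤ t) :
    K * doublePhase p q a t ≤ doublePhase p q a (K ^ (1 / p) * t) := by
  have hKp := mul_rpow_le_rpow_inv_mul_rpow hp le_rfl hK ht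
  have hKq := mul_rpow_le_rpow_inv_mul_rpow hp hpq hK ht
  unfold doublePhase
  nlinarith

lemma doublePhase_lt_doublePhase (hp : 0 < p) (hq : 0 ≤ q) (ha : 0 ≤ a) {s : ℝ} (hs : 0 ≤ s)
    (hst : s < t) : doublePhase p q a s < doublePhase p q a t := by
  unfold doublePhase
  exact add_lt_add_of_lt_of_le (rpow_lt_rpow hs hst hp)
    (mul_le_mul_of_nonneg_left (rpow_le_rpow hs hst.le hq) ha)

lemma doublePhase_le_mul_doublePhase_of_le_mul {b : ℝ} (hK : 1 ≤ K) (ht : 0 ≤ t)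
    (hba : b ≤ K * a) : doublePhase p q b t ≤ K * doublePhase p q a t := by
  have htp : 0 ≤ t ^ p := rpow_nonneg ht p
  have htq : 0 ≤ t ^ q := rpow_nonneg ht q
  unfold doublePhase
  nlinarith

theorem le_rpow_inv_mul_of_doublePhase_eq {s b : ℝ} (hp : 0 < p) (hpq : p ≤ q) (hK : 1 ≤ K)
    (ha : 0 ≤ a) (ht : 0 ≤ t) (hba : b ≤ K * a)
    (hH : doublePhase p q a s = doublePhase p q b t) : s ≤ K ^ (1 / p) * t := by
  by_contra! hs
  have := calc
    doublePhase p q b t ≤ K * doublePhase p q a t :=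
      doublePhase_le_mul_doublePhase_of_le_mul hK ht hba
    _ ≤ doublePhase p q a (K ^ (1 / p) * t) :=
      mul_doublePhase_le_doublePhase_rpow_inv_mul hp hpq hK ha ht
    _ < doublePhase p q a s :=
      doublePhase_lt_doublePhase hp (hp.le.trans hpq) ha (by positivity) hs
  exact this.ne' hH

end doublePhase

theorem stmt4_general (p q c_a M C lam_w lam_v a_w a_v Λ : ℝ)
    (hp : 2 ≤ p) (hq : p < q) (hca : 1 ≤ c_a) (hM : 10 * c_a ≤ M)
    (hC : C = 2 * (1 + c_a + M))
    (hlw : 1 ≤ lam_w) (hlv : 1 ≤ lam_v) (haw : 0 ≤ a_w) (hav : 0 ≤ a_v)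
    (hΛw : lam_w ^ p + a_w * lam_w ^ q = Λ)
    (hΛv : lam_v ^ p + a_v * lam_v ^ q = Λ)
    (hcomp1 : a_v / (2 * c_a) < a_w) (hcomp2 : a_w < 2 * c_a * a_v) :
    lam_w ≤ C ^ ((1:ℝ)/p) * lam_v ∧ lam_v ≤ C ^ ((1:ℝ)/p) * lam_w := by
  have hp0 : 0 < p := by linarith
  have hC1 : 1 ≤ C := by linarith
  have hH : doublePhase p q a_w lam_w = doublePhase p q a_v lam_v := hΛw.trans hΛv.symm
  have hvw : a_v ≤ C * a_w := by
    rw [div_lt_iff₀ (by linarith)] at hcomp1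
    nlinarith
  have hwv : a_w ≤ C * a_v := by nlinarith
  exact ⟨le_rpow_inv_mul_of_doublePhase_eq hp0 hq.le hC1 haw (by linarith) hvw hH,
    le_rpow_inv_mul_of_doublePhase_eq hp0 hq.le hC1 hav (by linarith) hwv hH.symm⟩

/-- Comparability of intrinsic scaling factors: if `λ_w^p + a_w λ_w^q = λ_v^p + a_v λ_v^q = Λ`
and the coefficient values `a_w, a_v` are comparable up to factor `2 c_a`, then
`λ_w ≤ C^{1/p} λ_v` and `λ_v ≤ C^{1/p} λ_w` for `C = 2(1 + c_a + M)`, `M ≥ 10 c_a`. -/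
theorem stmt4 (p q c_a M C lam_w lam_v a_w a_v Λ : ℝ)
    (hp : 2 ≤ p) (hq : p < q) (hca : 1 ≤ c_a) (hM : 10 * c_a ≤ M)
    (hC : C = 2 * (1 + c_a + M))
    (hlw : 1 ≤ lam_w) (hlv : 1 ≤ lam_v) (haw : 0 ≤ a_w) (hav : 0 ≤ a_v)
    (hΛw : lam_w ^ p + a_w * lam_w ^ q = Λ)
    (hΛv : lam_v ^ p + a_v * lam_v ^ q = Λ) (hΛ : 0 < Λ)
    (hcomp1 : a_v / (2 * c_a) < a_w) (hcomp2 : a_w < 2 * c_a * a_v) :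
    lam_w ≤ C ^ ((1:ℝ)/p) * lam_v ∧ lam_v ≤ C ^ ((1:ℝ)/p) * lam_w :=
  stmt4_general p q c_a M C lam_w lam_v a_w a_v Λ hp hq hca hM hC hlw hlv haw hav hΛw hΛv hcomp1
    hcomp2
end
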